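/- arXiv:1907.02792 — 6 statements merged into one kernel-verified Lean document; each statement's English description precedes it below -/
import Mathlib

section
/- Let n ≥ 1, let A ⊆ ℝⁿ be a closed set and let F : ℝⁿ → ℝⁿ be a diffeomorphism of class C² of ℝⁿ onto ℝⁿ. Then ν_F maps the generalized unit normal bundle of A onto that of F(A): ν_F(N(A)) = N(F(A)). -/
open MeasureTheory Metric

/-- The generalized unit normal bundle `N(A)` of a closed set `A ⊆ ℝⁿ`:
pairs `(a, u)` with `a ∈ A`, `|u| = 1` and `δ_A(a + s u) = s` for some `s > 0`. -/
def normalBundle {n : ℕ} (A : Set (EuclideanSpace ℝ (Fin n))) :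
    Set (EuclideanSpace ℝ (Fin n) × EuclideanSpace ℝ (Fin n)) :=
  {p | p.1 ∈ A ∧ ‖p.2‖ = 1 ∧ ∃ s : ℝ, 0 < s ∧ Metric.infDist (p.1 + s • p.2) A = s}

/-- The map `ν_F (a, u) = (F a, (DF(a)⁻¹)* u / |(DF(a)⁻¹)* u|)` associated to a diffeomorphism
`F` with inverse `G` (so that `DF(a)⁻¹ = DG(F a)`). -/
noncomputable def nuMap {n : ℕ} (F G : EuclideanSpace ℝ (Fin n) → EuclideanSpace ℝ (Fin n))
    (p : EuclideanSpace ℝ (Fin n) × EuclideanSpace ℝ (Fin n)) :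
    EuclideanSpace ℝ (Fin n) × EuclideanSpace ℝ (Fin n) :=
  (F p.1, ‖ContinuousLinearMap.adjoint (fderiv ℝ G (F p.1)) p.2‖⁻¹ •
    ContinuousLinearMap.adjoint (fderiv ℝ G (F p.1)) p.2)

/-!
The condition `δ_A(a + s u) = s` for some `s > 0` says exactly that `u` is a proximal normal
of `A` at `a`: `⟪b - a, u⟫ ≤ C ‖b - a‖²` for some `C` and all `b ∈ A`. This inequality survives a
`C²` change of variables: writing `b = G y` and expanding `G` to second order at `c = F a` gives
`⟪y - c, DG(c)* u⟫ ≤ C' ‖y - c‖²` for `y ∈ F(A)` near `c`, and Cauchy–Schwarz takes care of the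
points far from `c`. Applied to `F` and to `G = F⁻¹`, this gives both inclusions, since
`ν_F ∘ ν_G` is the identity on unit vectors.
-/

open Asymptotics Topology Function RealInnerProductSpace

theorem ContDiffAt.isBigO_sub_sub_fderiv {E F : Type*} [NormedAddCommGroup E] [NormedSpace ℝ E]
    [NormedAddCommGroup F] [NormedSpace ℝ F] {f : E → F} {a : E} (hf : ContDiffAt ℝ 2 f a) :
    (fun x ↦ f x - f a - fderiv ℝ f a (x - a)) =O[𝓝 a] fun x ↦ ‖x - a‖ ^ 2 := by
  obtain ⟨K, hK₀, hK⟩ :=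
    ((hf.fderiv_right le_rfl).differentiableAt one_ne_zero).isBigO_sub.exists_pos
  have hdiff : ∀ᶠ x in 𝓝 a, DifferentiableAt ℝ f x :=
    (hf.eventually (by simp)).mono fun x hx ↦ hx.differentiableAt two_ne_zero
  obtain ⟨r, hr, hball⟩ := Metric.eventually_nhds_iff_ball.1 (hK.bound.and hdiff)
  refine IsBigO.of_bound K (Metric.eventually_nhds_iff_ball.2 ⟨r, hr, fun x hx ↦ ?_⟩)
  have hsub : closedBall a ‖x - a‖ ⊆ ball a r :=
    closedBall_subset_ball (by rwa [← dist_eq_norm, ← mem_ball])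
  have hderiv : ∀ z ∈ closedBall a ‖x - a‖, ‖fderiv ℝ f z - fderiv ℝ f a‖ ≤ K * ‖x - a‖ := by
    intro z hz
    refine (hball z (hsub hz)).1.trans ?_
    gcongr
    exact mem_closedBall_iff_norm.1 hz
  calc ‖f x - f a - fderiv ℝ f a (x - a)‖
      ≤ K * ‖x - a‖ * ‖x - a‖ :=
        (convex_closedBall a _).norm_image_sub_le_of_norm_fderiv_le'
          (fun z hz ↦ (hball z (hsub hz)).2) hderiv (mem_closedBall_self (norm_nonneg _))
          (mem_closedBall_iff_norm.2 le_rfl)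
    _ = K * ‖‖x - a‖ ^ 2‖ := by rw [norm_pow, norm_norm]; ring

section InnerProductSpace

variable {E E' : Type*} [NormedAddCommGroup E] [InnerProductSpace ℝ E]
  [NormedAddCommGroup E'] [InnerProductSpace ℝ E']

def IsProximalNormal (A : Set E) (a w : E) : Prop :=
  ∃ C : ℝ, ∀ b ∈ A, ⟪b - a, w⟫ ≤ C * ‖b - a‖ ^ 2

theorem IsProximalNormal.smul {A : Set E} {a w : E} (h : IsProximalNormal A a w) {c : ℝ}
    (hc : 0 ≤ c) : IsProximalNormal A a (c • w) := by
  obtain ⟨C, hC⟩ := h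
  refine ⟨c * C, fun b hb ↦ ?_⟩
  rw [real_inner_smul_right, mul_assoc]
  exact mul_le_mul_of_nonneg_left (hC b hb) hc

theorem isProximalNormal_of_eventually {A : Set E} {a w : E} {C : ℝ}
    (h : ∀ᶠ b in 𝓝 a, b ∈ A → ⟪b - a, w⟫ ≤ C * ‖b - a‖ ^ 2) : IsProximalNormal A a w := by
  obtain ⟨r, hr, hball⟩ := Metric.eventually_nhds_iff_ball.1 h
  refine ⟨max C (‖w‖ / r), fun b hb ↦ ?_⟩
  rcases lt_or_ge ‖b - a‖ r with hbr | hbr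
  · refine (hball b (mem_ball_iff_norm.2 hbr) hb).trans ?_
    gcongr
    exact le_max_left _ _
  · calc ⟪b - a, w⟫ ≤ ‖b - a‖ * ‖w‖ := real_inner_le_norm _ _
      _ = ‖w‖ / r * (r * ‖b - a‖) := by field_simp
      _ ≤ ‖w‖ / r * ‖b - a‖ ^ 2 := by gcongr; nlinarith
      _ ≤ max C (‖w‖ / r) * ‖b - a‖ ^ 2 := by gcongr; exact le_max_right _ _

theorem infDist_add_smul_eq_iff {A : Set E} {a u : E} (ha : a ∈ A) (hu : ‖u‖ = 1) {s : ℝ}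
    (hs : 0 < s) :
    infDist (a + s • u) A = s ↔ ∀ b ∈ A, ⟪b - a, u⟫ ≤ (2 * s)⁻¹ * ‖b - a‖ ^ 2 := by
  have hle : infDist (a + s • u) A ≤ s := (infDist_le_dist_of_mem ha).trans_eq <| by
    rw [dist_eq_norm, add_sub_cancel_left, norm_smul, hu, mul_one, Real.norm_of_nonneg hs.le]
  rw [le_antisymm_iff, and_iff_right hle, le_infDist ⟨a, ha⟩]
  refine forall₂_congr fun b _ ↦ ?_
  have hdist : dist (a + s • u) b ^ 2 = ‖b - a‖ ^ 2 - 2 * s * ⟪b - a, u⟫ + s ^ 2 := by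
    rw [dist_eq_norm, show a + s • u - b = s • u - (b - a) by abel, norm_sub_sq_real,
      real_inner_smul_left, norm_smul, Real.norm_of_nonneg hs.le, hu, real_inner_comm]
    ring
  rw [← sq_le_sq₀ hs.le dist_nonneg, hdist, inv_mul_eq_div, le_div_iff₀ (by positivity)]
  constructor <;> intro <;> linarith

theorem exists_infDist_add_smul_eq_iff_isProximalNormal {A : Set E} {a u : E} (ha : a ∈ A)
    (hu : ‖u‖ = 1) : (∃ s : ℝ, 0 < s ∧ infDist (a + s • u) A = s) ↔ IsProximalNormal A a u := by
  constructor
  · rintro ⟨s, hs, h⟩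
    exact ⟨_, (infDist_add_smul_eq_iff ha hu hs).1 h⟩
  · rintro ⟨C, hC⟩
    refine ⟨(2 * (max C 0 + 1))⁻¹, by positivity, (infDist_add_smul_eq_iff ha hu (by positivity)).2
      fun b hb ↦ (hC b hb).trans ?_⟩
    rw [show (2 * (2 * (max C 0 + 1))⁻¹)⁻¹ = max C 0 + 1 by field_simp]
    gcongr
    linarith [le_max_left C 0]

variable [CompleteSpace E] [CompleteSpace E']

theorem IsProximalNormal.pullback {A : Set E} {B : Set E'} {G : E' → E} {c : E'} {u : E}
    (h : IsProximalNormal A (G c) u) (hG : ContDiffAt ℝ 2 G c) (hBA : Set.MapsTo G B A) :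
    IsProximalNormal B c (ContinuousLinearMap.adjoint (fderiv ℝ G c) u) := by
  obtain ⟨C, hC⟩ := h
  set T := fderiv ℝ G c
  obtain ⟨K, hK⟩ := hG.isBigO_sub_sub_fderiv.bound
  obtain ⟨L, hL⟩ := (hG.differentiableAt two_ne_zero).isBigO_sub.bound
  refine isProximalNormal_of_eventually (C := max C 0 * L ^ 2 + K * ‖u‖) ?_
  filter_upwards [hK, hL] with y hKy hLy hy
  rw [norm_pow, norm_norm] at hKy
  calc ⟪y - c, ContinuousLinearMap.adjoint T u⟫
      = ⟪G y - G c, u⟫ - ⟪G y - G c - T (y - c), u⟫ := by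
        rw [ContinuousLinearMap.adjoint_inner_right, inner_sub_left (G y - G c), sub_sub_cancel]
    _ ≤ max C 0 * ‖G y - G c‖ ^ 2 + ‖G y - G c - T (y - c)‖ * ‖u‖ := by
        rw [sub_eq_add_neg]
        gcongr
        · exact (hC _ (hBA hy)).trans (by gcongr; exact le_max_left _ _)
        · exact (neg_le_abs _).trans (abs_real_inner_le_norm _ _)
    _ ≤ max C 0 * (L * ‖y - c‖) ^ 2 + K * ‖y - c‖ ^ 2 * ‖u‖ := by gcongr
    _ = (max C 0 * L ^ 2 + K * ‖u‖) * ‖y - c‖ ^ 2 := by ring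

theorem adjoint_fderiv_apply_adjoint_fderiv {F : E → E'} {G : E' → E} {a : E}
    (hF : DifferentiableAt ℝ F a) (hG : DifferentiableAt ℝ G (F a)) (hGF : LeftInverse G F)
    (u : E) :
    ContinuousLinearMap.adjoint (fderiv ℝ F a)
      (ContinuousLinearMap.adjoint (fderiv ℝ G (F a)) u) = u := by
  have hcomp : (fderiv ℝ G (F a)).comp (fderiv ℝ F a) = ContinuousLinearMap.id ℝ E := by
    rw [← fderiv_comp a hG hF, hGF.comp_eq_id, fderiv_id]
  rw [← ContinuousLinearMap.comp_apply, ← ContinuousLinearMap.adjoint_comp, hcomp,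
    ContinuousLinearMap.adjoint_id, ContinuousLinearMap.id_apply]

theorem adjoint_fderiv_apply_ne_zero {F : E → E'} {G : E' → E} {a : E}
    (hF : DifferentiableAt ℝ F a) (hG : DifferentiableAt ℝ G (F a)) (hGF : LeftInverse G F)
    {u : E} (hu : u ≠ 0) :
    ContinuousLinearMap.adjoint (fderiv ℝ G (F a)) u ≠ 0 := fun h ↦ hu <| by
  rw [← adjoint_fderiv_apply_adjoint_fderiv hF hG hGF u, h, map_zero]

end InnerProductSpace

section NormalBundle

variable {n : ℕ} {F G : EuclideanSpace ℝ (Fin n) → EuclideanSpace ℝ (Fin n)}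

theorem mem_normalBundle_iff {A : Set (EuclideanSpace ℝ (Fin n))}
    {p : EuclideanSpace ℝ (Fin n) × EuclideanSpace ℝ (Fin n)} :
    p ∈ normalBundle A ↔ p.1 ∈ A ∧ ‖p.2‖ = 1 ∧ IsProximalNormal A p.1 p.2 :=
  and_congr_right fun ha ↦ and_congr_right fun hu ↦
    exists_infDist_add_smul_eq_iff_isProximalNormal ha hu

theorem nuMap_mem_normalBundle {A : Set (EuclideanSpace ℝ (Fin n))} (hF : Differentiable ℝ F)
    (hG : ContDiff ℝ 2 G) (hGF : LeftInverse G F)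
    {p : EuclideanSpace ℝ (Fin n) × EuclideanSpace ℝ (Fin n)} (hp : p ∈ normalBundle A) :
    nuMap F G p ∈ normalBundle (F '' A) := by
  obtain ⟨ha, hu, hprox⟩ := mem_normalBundle_iff.1 hp
  have hw := adjoint_fderiv_apply_ne_zero (hF p.1) (hG.differentiable two_ne_zero _) hGF
    (norm_ne_zero_iff.1 (hu.trans_ne one_ne_zero))
  have hmaps : Set.MapsTo G (F '' A) A := by
    rintro _ ⟨x, hx, rfl⟩
    rwa [hGF x]
  rw [← hGF p.1] at hprox
  exact mem_normalBundle_iff.2 ⟨Set.mem_image_of_mem F ha, norm_smul_inv_norm hw,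
    (hprox.pullback hG.contDiffAt hmaps).smul (inv_nonneg.2 (norm_nonneg _))⟩

theorem nuMap_nuMap (hF : Differentiable ℝ F) (hG : Differentiable ℝ G) (hFG : LeftInverse F G)
    {p : EuclideanSpace ℝ (Fin n) × EuclideanSpace ℝ (Fin n)} (hp : ‖p.2‖ = 1) :
    nuMap F G (nuMap G F p) = p := by
  have hinv := adjoint_fderiv_apply_adjoint_fderiv (hG p.1) (hF _) hFG p.2
  have hw := adjoint_fderiv_apply_ne_zero (hG p.1) (hF _) hFG
    (norm_ne_zero_iff.1 (hp.trans_ne one_ne_zero))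
  simp only [nuMap, hFG p.1]
  generalize ContinuousLinearMap.adjoint (fderiv ℝ F (G p.1)) p.2 = w at hinv hw ⊢
  rw [map_smul, hinv, norm_smul, hp, mul_one, norm_inv, norm_norm, inv_inv, smul_smul,
    mul_inv_cancel₀ (norm_ne_zero_iff.2 hw), one_smul]

end NormalBundle

theorem stmt1_general {n : ℕ} (A : Set (EuclideanSpace ℝ (Fin n)))
    (F G : EuclideanSpace ℝ (Fin n) → EuclideanSpace ℝ (Fin n))
    (hF : ContDiff ℝ 2 F) (hG : ContDiff ℝ 2 G)
    (hGF : ∀ x, G (F x) = x) (hFG : ∀ x, F (G x) = x) :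
    nuMap F G '' normalBundle A = normalBundle (F '' A) := by
  have hF' := hF.differentiable two_ne_zero
  have hG' := hG.differentiable two_ne_zero
  refine Set.Subset.antisymm ?_ ?_
  · rintro _ ⟨p, hp, rfl⟩
    exact nuMap_mem_normalBundle hF' hG hGF hp
  · intro p hp
    refine ⟨nuMap G F p, ?_, nuMap_nuMap hF' hG' hFG hp.2.1⟩
    simpa only [LeftInverse.image_image hGF] using nuMap_mem_normalBundle hG' hF hFG hp

/-- If `A ⊆ ℝⁿ` is closed and `F : ℝⁿ → ℝⁿ` is a `C²` diffeomorphism of `ℝⁿ` onto `ℝⁿ` with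
inverse `G`, then `ν_F (N(A)) = N(F(A))`. -/
theorem stmt1 {n : ℕ} (hn : 1 ≤ n) (A : Set (EuclideanSpace ℝ (Fin n))) (hA : IsClosed A)
    (F G : EuclideanSpace ℝ (Fin n) → EuclideanSpace ℝ (Fin n))
    (hF : ContDiff ℝ 2 F) (hG : ContDiff ℝ 2 G)
    (hGF : ∀ x, G (F x) = x) (hFG : ∀ x, F (G x) = x) :
    nuMap F G '' normalBundle A = normalBundle (F '' A) :=
  stmt1_general A F G hF hG hGF hFG
end

section
/- Let n ≥ 1, let A ⊆ ℝⁿ be a closed set, let Ω ⊆ ℝⁿ be an open set, and let C = Clos(A ∩ Ω) be the closure of A ∩ Ω in ℝⁿ. Then the generalized unit normal bundles of A and of C agree over Ω: {(a,u) ∈ N(A) : a ∈ Ω} = {(a,u) ∈ N(C) : a ∈ Ω}. -/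
/-!
Both bundles are read off from nearest points. If `a` is a nearest point of `A` to `x = a + s u`,
it is also one of the smaller set `C ⊆ A`. Conversely, if `a` is a nearest point of `C` to `x`,
then it stays one to every point of the segment `[a, x]`; once `x` is moved so close to `a` that
the ball around `x` through `a` lies in `Ω`, every point of `A` in that ball lies in `A ∩ Ω ⊆ C`,
so no point of `A` is closer to `x` than `a`.
-/

open MeasureTheory Metric

section PseudoMetricSpace

variable {X : Type*} [PseudoMetricSpace X] {A C : Set X} {a x y : X}

lemma infDist_eq_dist_of_subset (haC : a ∈ C) (hCA : C ⊆ A) (h : infDist x A = dist x a) :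
    infDist x C = dist x a :=
  le_antisymm (infDist_le_dist_of_mem haC) (h ▸ infDist_le_infDist_of_subset hCA ⟨a, haC⟩)

lemma infDist_eq_dist_of_ball_inter_subset (hloc : ball x (dist x a) ∩ A ⊆ C)
    (hA : a ∈ A) (h : infDist x C = dist x a) : infDist x A = dist x a := by
  refine le_antisymm (infDist_le_dist_of_mem hA) (not_lt.mp fun hlt => ?_)
  obtain ⟨b, hbA, hb⟩ := (infDist_lt_iff ⟨a, hA⟩).mp hlt
  have hbC : b ∈ C := hloc ⟨mem_ball'.mpr hb, hbA⟩
  exact (infDist_le_dist_of_mem hbC).not_gt (h ▸ hb)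

lemma infDist_eq_dist_of_dist_add_dist_eq (ha : a ∈ A) (h : infDist x A = dist x a)
    (hy : dist x y + dist y a = dist x a) : infDist y A = dist y a :=
  le_antisymm (infDist_le_dist_of_mem ha)
    (by linarith [infDist_le_infDist_add_dist (x := x) (y := y) (s := A)])

end PseudoMetricSpace

section NormedSpace

variable {E : Type*} [NormedAddCommGroup E] [NormedSpace ℝ E]

lemma dist_add_smul_left_of_norm_eq_one {u : E} (hu : ‖u‖ = 1) (a : E) {s : ℝ} (hs : 0 ≤ s) :
    dist (a + s • u) a = s := by
  rw [dist_self_add_left, norm_smul, hu, Real.norm_of_nonneg hs, mul_one]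

end NormedSpace

section NormalBundle

variable {n : ℕ} {A C : Set (EuclideanSpace ℝ (Fin n))} {a u : EuclideanSpace ℝ (Fin n)}

lemma mem_normalBundle_iff_infDist_eq_dist : (a, u) ∈ normalBundle A ↔
    a ∈ A ∧ ‖u‖ = 1 ∧ ∃ s : ℝ, 0 < s ∧ infDist (a + s • u) A = dist (a + s • u) a := by
  refine and_congr_right fun _ => ⟨fun ⟨hu, s, hs, hd⟩ => ⟨hu, s, hs, ?_⟩,
    fun ⟨hu, s, hs, hd⟩ => ⟨hu, s, hs, ?_⟩⟩
  · rwa [dist_add_smul_left_of_norm_eq_one hu a hs.le]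
  · rwa [dist_add_smul_left_of_norm_eq_one hu a hs.le] at hd

lemma mem_normalBundle_of_subset (h : (a, u) ∈ normalBundle A) (haC : a ∈ C) (hCA : C ⊆ A) :
    (a, u) ∈ normalBundle C := by
  obtain ⟨-, hu, s, hs, hd⟩ := mem_normalBundle_iff_infDist_eq_dist.mp h
  exact mem_normalBundle_iff_infDist_eq_dist.mpr
    ⟨haC, hu, s, hs, infDist_eq_dist_of_subset haC hCA hd⟩

lemma mem_normalBundle_of_ball_inter_subset (h : (a, u) ∈ normalBundle C) (hCA : C ⊆ A)
    {r : ℝ} (hr : 0 < r) (hloc : ball a r ∩ A ⊆ C) : (a, u) ∈ normalBundle A := by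
  obtain ⟨haC, hu, s, hs, hd⟩ := mem_normalBundle_iff_infDist_eq_dist.mp h
  set t := min s (r / 2)
  have ht : 0 < t := lt_min hs (half_pos hr)
  have hdist : ∀ {c : ℝ}, 0 ≤ c → dist (a + c • u) a = c :=
    fun hc => dist_add_smul_left_of_norm_eq_one hu a hc
  have hseg : dist (a + s • u) (a + t • u) + dist (a + t • u) a = dist (a + s • u) a := by
    rw [dist_add_left, dist_eq_norm, ← sub_smul, norm_smul, hu, hdist ht.le, hdist hs.le,
      Real.norm_of_nonneg (sub_nonneg.mpr (min_le_left _ _))]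
    ring
  have hball : ball (a + t • u) (dist (a + t • u) a) ⊆ ball a r := by
    rw [hdist ht.le]
    refine ball_subset_ball' ?_
    rw [hdist ht.le]
    linarith [min_le_right s (r / 2)]
  refine mem_normalBundle_iff_infDist_eq_dist.mpr ⟨hCA haC, hu, t, ht, ?_⟩
  exact infDist_eq_dist_of_ball_inter_subset (fun b hb => hloc ⟨hball hb.1, hb.2⟩) (hCA haC)
    (infDist_eq_dist_of_dist_add_dist_eq haC hd hseg)

end NormalBundle

theorem stmt3_general {n : ℕ} (A : Set (EuclideanSpace ℝ (Fin n))) (hA : IsClosed A)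
    (Ω : Set (EuclideanSpace ℝ (Fin n))) (hΩ : IsOpen Ω) :
    {p ∈ normalBundle A | p.1 ∈ Ω} = {p ∈ normalBundle (closure (A ∩ Ω)) | p.1 ∈ Ω} := by
  have hCA : closure (A ∩ Ω) ⊆ A := closure_minimal Set.inter_subset_left hA
  ext ⟨a, u⟩
  constructor
  · rintro ⟨h, haΩ⟩
    exact ⟨mem_normalBundle_of_subset h (subset_closure ⟨h.1, haΩ⟩) hCA, haΩ⟩
  · rintro ⟨h, haΩ⟩
    obtain ⟨r, hr, hball⟩ := isOpen_iff.mp hΩ a haΩ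
    exact ⟨mem_normalBundle_of_ball_inter_subset h hCA hr
      (fun b hb => subset_closure ⟨hb.2, hball hb.1⟩), haΩ⟩

/-- If `A ⊆ ℝⁿ` is closed, `Ω ⊆ ℝⁿ` is open and `C = Clos(A ∩ Ω)`, then
`N(A)|Ω = N(C)|Ω`. -/
theorem stmt3 {n : ℕ} (hn : 1 ≤ n) (A : Set (EuclideanSpace ℝ (Fin n))) (hA : IsClosed A)
    (Ω : Set (EuclideanSpace ℝ (Fin n))) (hΩ : IsOpen Ω) :
    {p ∈ normalBundle A | p.1 ∈ Ω} = {p ∈ normalBundle (closure (A ∩ Ω)) | p.1 ∈ Ω} :=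
  stmt3_general A hA Ω hΩ
end

section
/- Let n ≥ 1, let A ⊆ ℝⁿ be a closed set, let Ω ⊆ ℝⁿ be an open set, and let C = Clos(A ∩ Ω) be the closure of A ∩ Ω in ℝⁿ. Then for every integer 0 ≤ m ≤ n−1 the strata of A and of C agree on Ω: A^(m) ∩ Ω = C^(m) ∩ Ω. -/
/-!
Whether `u` is a unit normal of a closed set at `a` is decided arbitrarily close to `a`: if
`δ_A(a + s u) = s` then `δ_A(a + t u) = t` for all `0 < t ≤ s`, and for small `t` every point of `A`
that could be nearer to `a + t u` than `a` lies in a small ball around `a`. Inside `Ω` the sets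
`A` and `Clos(A ∩ Ω)` agree near each point, so their normal fibres, and with them their strata,
agree there.
-/

open MeasureTheory Metric

/-- The `m`-th stratum of a closed set `A ⊆ ℝⁿ`:
`A^(m) = {a ∈ A : 0 < H^{n-m-1}(N(A, a)) < ∞}`. -/
def stratum {n : ℕ} (A : Set (EuclideanSpace ℝ (Fin n))) (m : ℕ) :
    Set (EuclideanSpace ℝ (Fin n)) :=
  {a | a ∈ A ∧ 0 < μH[((n - m - 1 : ℕ) : ℝ)] {u | (a, u) ∈ normalBundle A}
      ∧ μH[((n - m - 1 : ℕ) : ℝ)] {u | (a, u) ∈ normalBundle A} ≠ ⊤}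

open Set

section MetricSpace

variable {α : Type*} [PseudoMetricSpace α]

lemma infDist_eq_dist_of_subset_s4 {A B : Set α} {a x : α} (hBA : B ⊆ A) (haB : a ∈ B)
    (h : infDist x A = dist x a) : infDist x B = dist x a :=
  le_antisymm (infDist_le_dist_of_mem haB) (h ▸ infDist_le_infDist_of_subset hBA ⟨a, haB⟩)

/-- Points of `A` nearer to `x` than `a` lie in `ball a (2 * dist x a)`. -/
lemma infDist_eq_dist_of_inter_ball_subset {A B : Set α} {a x : α} {r : ℝ} (haA : a ∈ A)
    (hAB : A ∩ ball a r ⊆ B) (hxr : 2 * dist x a ≤ r) (h : infDist x B = dist x a) :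
    infDist x A = dist x a := by
  refine le_antisymm (infDist_le_dist_of_mem haA) ((le_infDist ⟨a, haA⟩).2 fun y hyA => ?_)
  by_cases hy : y ∈ ball a r
  · exact h ▸ infDist_le_dist_of_mem (hAB ⟨hyA, hy⟩)
  · have hyr : r ≤ dist y a := not_lt.1 hy
    linarith [dist_triangle y x a, dist_comm x y]

end MetricSpace

section NormedSpace

variable {E : Type*} [NormedAddCommGroup E] [NormedSpace ℝ E]

lemma dist_add_smul_self {a u : E} (hu : ‖u‖ = 1) {t : ℝ} (ht : 0 ≤ t) :
    dist (a + t • u) a = t := by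
  rw [dist_self_add_left, norm_smul, hu, mul_one, Real.norm_of_nonneg ht]

lemma infDist_add_smul_of_le {A : Set E} {a u : E} (haA : a ∈ A) (hu : ‖u‖ = 1) {s t : ℝ}
    (hs : infDist (a + s • u) A = s) (ht : 0 ≤ t) (hts : t ≤ s) :
    infDist (a + t • u) A = t := by
  have hst : dist (a + s • u) (a + t • u) = s - t := by
    rw [dist_add_left, dist_eq_norm, ← sub_smul, norm_smul, hu, mul_one,
      Real.norm_of_nonneg (sub_nonneg.2 hts)]
  refine le_antisymm ((infDist_le_dist_of_mem haA).trans_eq (dist_add_smul_self hu ht)) ?_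
  linarith [infDist_le_infDist_add_dist (s := A) (x := a + s • u) (y := a + t • u)]

end NormedSpace

section Euclidean

variable {n : ℕ}

lemma normalFiber_eq_of_inter_ball_subset {A B : Set (EuclideanSpace ℝ (Fin n))}
    {a : EuclideanSpace ℝ (Fin n)} {r : ℝ} (hr : 0 < r) (hBA : B ⊆ A) (haB : a ∈ B)
    (hAB : A ∩ ball a r ⊆ B) :
    {u | (a, u) ∈ normalBundle B} = {u | (a, u) ∈ normalBundle A} := by
  ext u
  constructor
  · rintro ⟨-, hu, s, hs, hB⟩
    set t := min s (r / 2)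
    have ht : 0 < t := lt_min hs (half_pos hr)
    have hdist : dist (a + t • u) a = t := dist_add_smul_self hu ht.le
    have htB : infDist (a + t • u) B = dist (a + t • u) a :=
      (infDist_add_smul_of_le haB hu hB ht.le (min_le_left _ _)).trans hdist.symm
    have htr : 2 * dist (a + t • u) a ≤ r := by
      linarith [min_le_right s (r / 2)]
    exact ⟨hBA haB, hu, t, ht,
      (infDist_eq_dist_of_inter_ball_subset (hBA haB) hAB htr htB).trans hdist⟩
  · rintro ⟨-, hu, s, hs, hA⟩
    have hdist : dist (a + s • u) a = s := dist_add_smul_self hu hs.le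
    exact ⟨haB, hu, s, hs,
      (infDist_eq_dist_of_subset_s4 hBA haB (hA.trans hdist.symm)).trans hdist⟩

lemma mem_stratum_iff_of_inter_ball_subset {A B : Set (EuclideanSpace ℝ (Fin n))}
    {a : EuclideanSpace ℝ (Fin n)} {r : ℝ} (hr : 0 < r) (hBA : B ⊆ A)
    (hAB : A ∩ ball a r ⊆ B) (m : ℕ) : a ∈ stratum B m ↔ a ∈ stratum A m := by
  by_cases haA : a ∈ A
  · have haB : a ∈ B := hAB ⟨haA, mem_ball_self hr⟩
    simp only [stratum, mem_ofPred_eq, normalFiber_eq_of_inter_ball_subset hr hBA haB hAB, haA,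
      haB, true_and]
  · exact iff_of_false (fun h => haA (hBA h.1)) (fun h => haA h.1)

end Euclidean

theorem stmt4_general {n : ℕ} (A : Set (EuclideanSpace ℝ (Fin n))) (hA : IsClosed A)
    (Ω : Set (EuclideanSpace ℝ (Fin n))) (hΩ : IsOpen Ω)
    (m : ℕ) :
    stratum A m ∩ Ω = stratum (closure (A ∩ Ω)) m ∩ Ω := by
  have hCA : closure (A ∩ Ω) ⊆ A := hA.closure_subset_iff.2 inter_subset_left
  ext a
  refine and_congr_left fun haΩ => ?_
  obtain ⟨r, hr, hball⟩ := isOpen_iff.1 hΩ a haΩ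
  exact (mem_stratum_iff_of_inter_ball_subset hr hCA
    (fun x hx => subset_closure ⟨hx.1, hball hx.2⟩) m).symm

/-- If `A ⊆ ℝⁿ` is closed, `Ω ⊆ ℝⁿ` is open and `C = Clos(A ∩ Ω)`, then
`A^(m) ∩ Ω = C^(m) ∩ Ω` for every `0 ≤ m ≤ n - 1`. -/
theorem stmt4 {n : ℕ} (hn : 1 ≤ n) (A : Set (EuclideanSpace ℝ (Fin n))) (hA : IsClosed A)
    (Ω : Set (EuclideanSpace ℝ (Fin n))) (hΩ : IsOpen Ω)
    (m : ℕ) (hm : m ≤ n - 1) :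
    stratum A m ∩ Ω = stratum (closure (A ∩ Ω)) m ∩ Ω :=
  stmt4_general A hA Ω hΩ m
end

section
/- Suppose V and W are finite-dimensional real inner product spaces with dim V = m and dim W = n, f : V → W is a linear map, 0 < t < ∞, and b is a symmetric bilinear form on W such that b(w,w) ≤ t|w|² for every w ∈ W. Then ‖f‖²·trace(b) + (1−n)·t·‖f‖² ≤ trace(b ∘ ⨀₂f) ≤ m·t·‖f‖², where ‖f‖ is the operator norm of f, trace(b) = Σᵢ b(wᵢ,wᵢ) for any orthonormal basis w₁,…,w_n of W, and b ∘ ⨀₂f is the bilinear form on V defined by (v,v') ↦ b(f(v), f(v')), so that trace(b ∘ ⨀₂f) = Σᵢ b(f(vᵢ), f(vᵢ)) for any orthonormal basis v₁,…,v_m of V. -/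
open Module RealInnerProductSpace ContinuousLinearMap

/-! Diagonalise `f ∘ f†` in an orthonormal basis `u` of `W`: `f (f† uⱼ) = λⱼ uⱼ` with
`λⱼ = |f† uⱼ|² ≤ ‖f‖²` and `‖f‖² ≤ ∑ λⱼ`. Then `trace (b ∘ ⨀₂ f) = ∑ λⱼ b(uⱼ, uⱼ)` and
`trace b = ∑ b(uⱼ, uⱼ)` with `b(uⱼ, uⱼ) ≤ t`, and the lower bound is the sum of the inequalities
`(‖f‖² - λⱼ)(t - b(uⱼ, uⱼ)) ≥ 0`. The upper bound holds termwise. -/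

section

variable {ι κ V W : Type*} [Fintype ι] [Fintype κ]
  [NormedAddCommGroup V] [InnerProductSpace ℝ V] [CompleteSpace V]
  [NormedAddCommGroup W] [InnerProductSpace ℝ W] [CompleteSpace W]

theorem OrthonormalBasis.sum_apply_apply_eq_sum_apply_comp_adjoint
    (b : W →ₗ[ℝ] W →ₗ[ℝ] ℝ) (f : V →L[ℝ] W)
    (v : OrthonormalBasis ι ℝ V) (u : OrthonormalBasis κ ℝ W) :
    ∑ i, b (f (v i)) (f (v i)) = ∑ j, b (u j) (f (adjoint f (u j))) := by
  have hexpand : ∀ i, f (v i) = ∑ j, ⟪adjoint f (u j), v i⟫ • u j := fun i => by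
    conv_lhs => rw [← u.sum_repr' (f (v i))]
    simp_rw [adjoint_inner_left]
  have hcollect : ∀ j, ∑ i, ⟪adjoint f (u j), v i⟫ • f (v i) = f (adjoint f (u j)) := fun j => by
    conv_rhs => rw [← v.sum_repr' (adjoint f (u j))]
    simp_rw [map_sum, map_smul, real_inner_comm (v _)]
  calc ∑ i, b (f (v i)) (f (v i))
      = ∑ i, ∑ j, ⟪adjoint f (u j), v i⟫ * b (u j) (f (v i)) := by
        refine Finset.sum_congr rfl fun i _ => ?_
        nth_rw 1 [hexpand i]
        simp only [map_sum, map_smul, LinearMap.sum_apply, LinearMap.smul_apply, smul_eq_mul]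
    _ = ∑ j, b (u j) (f (adjoint f (u j))) := by
        rw [Finset.sum_comm]
        simp_rw [← hcollect, map_sum, map_smul, smul_eq_mul]

theorem OrthonormalBasis.sum_apply_self_eq (b : W →ₗ[ℝ] W →ₗ[ℝ] ℝ)
    (w : OrthonormalBasis ι ℝ W) (u : OrthonormalBasis κ ℝ W) :
    ∑ i, b (w i) (w i) = ∑ j, b (u j) (u j) := by
  simpa [adjoint_id] using
    w.sum_apply_apply_eq_sum_apply_comp_adjoint b (ContinuousLinearMap.id ℝ W) u

theorem OrthonormalBasis.opNorm_sq_le_sum_norm_adjoint_sq (f : V →L[ℝ] W)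
    (u : OrthonormalBasis κ ℝ W) : ‖f‖ ^ 2 ≤ ∑ j, ‖adjoint f (u j)‖ ^ 2 := by
  have hbound : ∀ x, ‖f x‖ ≤ √(∑ j, ‖adjoint f (u j)‖ ^ 2) * ‖x‖ := fun x => by
    rw [← Real.sqrt_sq (norm_nonneg x), ← Real.sqrt_mul (by positivity)]
    refine Real.le_sqrt_of_sq_le ?_
    calc ‖f x‖ ^ 2 = ∑ j, ⟪adjoint f (u j), x⟫ ^ 2 := by
          simp_rw [← u.sum_sq_inner_right (f x), adjoint_inner_left]
      _ ≤ ∑ j, ‖adjoint f (u j)‖ ^ 2 * ‖x‖ ^ 2 := by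
          gcongr with j
          rw [← mul_pow, ← sq_abs]
          gcongr
          exact abs_real_inner_le_norm _ _
      _ = (∑ j, ‖adjoint f (u j)‖ ^ 2) * ‖x‖ ^ 2 := Finset.sum_mul .. |>.symm
  calc ‖f‖ ^ 2 ≤ √(∑ j, ‖adjoint f (u j)‖ ^ 2) ^ 2 := by
        gcongr
        exact f.opNorm_le_bound (Real.sqrt_nonneg _) hbound
    _ = ∑ j, ‖adjoint f (u j)‖ ^ 2 := Real.sq_sqrt (by positivity)

end

theorem exists_orthonormalBasis_self_comp_adjoint_apply_eq_smul {V W : Type*}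
    [NormedAddCommGroup V] [InnerProductSpace ℝ V] [CompleteSpace V]
    [NormedAddCommGroup W] [InnerProductSpace ℝ W] [FiniteDimensional ℝ W]
    {n : ℕ} (hn : finrank ℝ W = n) (f : V →L[ℝ] W) :
    ∃ u : OrthonormalBasis (Fin n) ℝ W, ∀ j, f (adjoint f (u j)) = ‖adjoint f (u j)‖ ^ 2 • u j := by
  have hT : ((f ∘L adjoint f : W →L[ℝ] W) : W →ₗ[ℝ] W).IsSymmetric := by
    intro x y
    simp only [coe_coe, comp_apply]
    rw [← adjoint_inner_right, adjoint_inner_left]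
  have heigenvalue : ∀ (x : W) (μ : ℝ), ‖x‖ = 1 → f (adjoint f x) = μ • x →
      μ = ‖adjoint f x‖ ^ 2 := fun x μ hx h => by
    have := congrArg (⟪x, ·⟫) h
    rw [← adjoint_inner_left, real_inner_self_eq_norm_sq, inner_smul_right,
      real_inner_self_eq_norm_sq, hx] at this
    simpa using this.symm
  refine ⟨hT.eigenvectorBasis hn, fun j => ?_⟩
  have h := hT.apply_eigenvectorBasis hn j
  simp only [coe_coe, comp_apply, RCLike.ofReal_real_eq_id, id] at h
  rwa [← heigenvalue _ _ ((hT.eigenvectorBasis hn).orthonormal.1 j) h]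

theorem mul_sum_add_le_sum_mul {ι : Type*} [Fintype ι] {a β : ι → ℝ} {L t : ℝ}
    (ha : ∀ j, a j ≤ L) (hβ : ∀ j, β j ≤ t) (hL : L ≤ ∑ j, a j) (ht : 0 ≤ t) :
    L * ∑ j, β j + (1 - Fintype.card ι) * t * L ≤ ∑ j, a j * β j := by
  have hterm : ∀ j, L * β j + t * a j - t * L ≤ a j * β j := fun j => by
    nlinarith [mul_nonneg (sub_nonneg.2 (ha j)) (sub_nonneg.2 (hβ j))]
  have hsum := Finset.sum_le_sum fun j (_ : j ∈ Finset.univ) => hterm j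
  simp only [Finset.sum_sub_distrib, Finset.sum_add_distrib, ← Finset.mul_sum,
    Finset.sum_const, Finset.card_univ, nsmul_eq_mul] at hsum
  nlinarith [mul_le_mul_of_nonneg_left hL ht]

theorem stmt7_general {V W : Type*}
    [NormedAddCommGroup V] [InnerProductSpace ℝ V] [FiniteDimensional ℝ V]
    [NormedAddCommGroup W] [InnerProductSpace ℝ W] [FiniteDimensional ℝ W]
    (m n : ℕ) (hn : finrank ℝ W = n)
    (f : V →L[ℝ] W) (t : ℝ) (ht : 0 < t)
    (b : W →ₗ[ℝ] W →ₗ[ℝ] ℝ)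
    (hb : ∀ w : W, b w w ≤ t * ‖w‖ ^ 2)
    (vB : OrthonormalBasis (Fin m) ℝ V) (wB : OrthonormalBasis (Fin n) ℝ W) :
    ‖f‖ ^ 2 * (∑ j, b (wB j) (wB j)) + (1 - (n : ℝ)) * t * ‖f‖ ^ 2
        ≤ ∑ i, b (f (vB i)) (f (vB i))
    ∧ ∑ i, b (f (vB i)) (f (vB i)) ≤ (m : ℝ) * t * ‖f‖ ^ 2 := by
  obtain ⟨u, hu⟩ := exists_orthonormalBasis_self_comp_adjoint_apply_eq_smul hn f
  have htrace : ∑ i, b (f (vB i)) (f (vB i)) = ∑ j, ‖adjoint f (u j)‖ ^ 2 * b (u j) (u j) := by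
    simp [vB.sum_apply_apply_eq_sum_apply_comp_adjoint b f u, hu]
  have hadjoint : ∀ j, ‖adjoint f (u j)‖ ^ 2 ≤ ‖f‖ ^ 2 := fun j => by
    gcongr
    simpa [u.orthonormal.1 j] using (adjoint f).le_opNorm (u j)
  have hbu : ∀ j, b (u j) (u j) ≤ t := fun j => by simpa [u.orthonormal.1 j] using hb (u j)
  constructor
  · rw [htrace, wB.sum_apply_self_eq b u]
    simpa using mul_sum_add_le_sum_mul hadjoint hbu (u.opNorm_sq_le_sum_norm_adjoint_sq f) ht.le
  · calc ∑ i, b (f (vB i)) (f (vB i)) ≤ ∑ _i : Fin m, t * ‖f‖ ^ 2 := by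
          gcongr with i
          refine (hb _).trans ?_
          gcongr
          simpa [vB.orthonormal.1 i] using f.le_opNorm (vB i)
      _ = m * t * ‖f‖ ^ 2 := by simp [mul_assoc]

/-- If `V, W` are finite-dimensional real inner product spaces with `dim V = m`, `dim W = n`,
`f : V → W` is linear, `0 < t < ∞`, and `b` is a symmetric bilinear form on `W` with
`b(w, w) ≤ t |w|²` for all `w`, then
`‖f‖² trace(b) + (1 - n) t ‖f‖² ≤ trace(b ∘ ⨀₂ f) ≤ m t ‖f‖²`,
where the traces are computed with respect to (arbitrary) orthonormal bases. -/
theorem stmt7 {V W : Type*}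
    [NormedAddCommGroup V] [InnerProductSpace ℝ V] [FiniteDimensional ℝ V]
    [NormedAddCommGroup W] [InnerProductSpace ℝ W] [FiniteDimensional ℝ W]
    (m n : ℕ) (hm : finrank ℝ V = m) (hn : finrank ℝ W = n)
    (f : V →L[ℝ] W) (t : ℝ) (ht : 0 < t)
    (b : W →ₗ[ℝ] W →ₗ[ℝ] ℝ) (hsymm : ∀ w z, b w z = b z w)
    (hb : ∀ w : W, b w w ≤ t * ‖w‖ ^ 2)
    (vB : OrthonormalBasis (Fin m) ℝ V) (wB : OrthonormalBasis (Fin n) ℝ W) :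
    ‖f‖ ^ 2 * (∑ j, b (wB j) (wB j)) + (1 - (n : ℝ)) * t * ‖f‖ ^ 2
        ≤ ∑ i, b (f (vB i)) (f (vB i))
    ∧ ∑ i, b (f (vB i)) (f (vB i)) ≤ (m : ℝ) * t * ‖f‖ ^ 2 :=
  stmt7_general m n hn f t ht b hb vB wB
end

section
/- Let A = {(x,y,z) ∈ ℝ³ : z = |x|} and let F : ℝ³ → ℝ³ be the diffeomorphism F(x,y,z) = (x, y, z + 1 − x² − y²), so that F(A) = {(x,y,z) ∈ ℝ³ : z = |x| + 1 − x² − y²}. Then the set {u ∈ S² : ((0, y, 1 − y²), u) ∈ N(F(A)) for some y ∈ ℝ} of unit normals of F(A) attached to the curve F({x = z = 0}) = {(0, y, 1 − y²) : y ∈ ℝ} has nonempty interior relative to S²; in particular it has positive H² measure. -/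
open MeasureTheory Metric

/-!
Along the crease `p(y) = (0, y, 1 - y²)` the surface `z = |x| + 1 - x² - y²` is a ridge that
falls off in every direction, so from below it is reached at `p(y)` along a whole cone of
directions. Precisely, let `u` be a unit vector with `|u₀| ≤ -u₂` and choose `y` so that `u`
is orthogonal to the crease, `u₁ = 2 y u₂`. For `q = (x, t, |x| + 1 - x² - t²)` the quantity
`|p(y) + u/2 - q|² - 1/4` is a sum of three nonnegative terms, so the ball of radius `1/2`
around `p(y) + u/2` misses the surface and `(p(y), u) ∈ N(F(A))`. The cone is a neighbourhood
of `(0, 0, -1)` in `S²`, and its projection to the `xy`-plane contains a disc; that projection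
is `1`-Lipschitz, which gives positive `H²` measure.
-/

lemma mem_normalBundle_of_le_dist {n : ℕ} {A : Set (EuclideanSpace ℝ (Fin n))}
    {a u : EuclideanSpace ℝ (Fin n)} {s : ℝ} (ha : a ∈ A) (hu : ‖u‖ = 1) (hs : 0 < s)
    (h : ∀ q ∈ A, s ≤ dist (a + s • u) q) : (a, u) ∈ normalBundle A := by
  refine ⟨ha, hu, s, hs, le_antisymm ?_ ((le_infDist ⟨a, ha⟩).2 h)⟩
  calc infDist (a + s • u) A ≤ dist (a + s • u) a := infDist_le_dist_of_mem ha
    _ = s := by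
      rw [dist_eq_norm, add_sub_cancel_left, norm_smul, hu, mul_one, Real.norm_of_nonneg hs.le]

theorem hausdorffMeasure_pos_of_lipschitzWith {X E : Type*} [EMetricSpace X]
    [MeasurableSpace X] [BorelSpace X] [NormedAddCommGroup E] [NormedSpace ℝ E]
    [FiniteDimensional ℝ E] [MeasurableSpace E] [BorelSpace E] {f : X → E} {K : NNReal}
    (hf : LipschitzWith K f) {s : Set X} (hs : (interior (f '' s)).Nonempty) :
    0 < μH[Module.finrank ℝ E] s := by
  have h_image : 0 < μH[Module.finrank ℝ E] (f '' s) :=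
    (isOpen_interior.measure_pos _ hs).trans_le (measure_mono interior_subset)
  exact (ENNReal.mul_pos_iff.1 (h_image.trans_le (hf.hausdorffMeasure_image_le (by simp) s))).2

lemma quarter_le_sq_dist_of_mem_cone {u₀ u₁ u₂ x t y : ℝ} (hu : u₀ ^ 2 + u₁ ^ 2 + u₂ ^ 2 = 1)
    (hcone : |u₀| ≤ -u₂) (hy : u₁ = 2 * y * u₂) :
    1 / 4 ≤ (u₀ / 2 - x) ^ 2 + (y + u₁ / 2 - t) ^ 2
      + (1 - y ^ 2 + u₂ / 2 - (|x| + 1 - x ^ 2 - t ^ 2)) ^ 2 := by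
  have h_cross : u₀ * x ≤ -u₂ * |x| := by
    calc u₀ * x ≤ |u₀| * |x| := by rw [← abs_mul]; exact le_abs_self _
      _ ≤ -u₂ * |x| := mul_le_mul_of_nonneg_right hcone (abs_nonneg x)
  have h_u₂ : 0 ≤ 1 + u₂ := by nlinarith [abs_nonneg u₀]
  have h_expand : (u₀ / 2 - x) ^ 2 + (y + u₁ / 2 - t) ^ 2
      + (1 - y ^ 2 + u₂ / 2 - (|x| + 1 - x ^ 2 - t ^ 2)) ^ 2 - 1 / 4
      = (x ^ 2 + t ^ 2 - y ^ 2 - |x|) ^ 2 + (-u₂ * |x| - u₀ * x)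
        + (x ^ 2 + (t - y) ^ 2) * (1 + u₂) := by
    subst hy
    linear_combination (1 / 4) * hu
  linarith [sq_nonneg (x ^ 2 + t ^ 2 - y ^ 2 - |x|),
    mul_nonneg (add_nonneg (sq_nonneg x) (sq_nonneg (t - y))) h_u₂]

namespace CreasedSurface

noncomputable section

local notation "ℝ³" => EuclideanSpace ℝ (Fin 3)

def surface : Set ℝ³ := {p | p 2 = |p 0| + 1 - p 0 ^ 2 - p 1 ^ 2}

def creasePoint (y : ℝ) : ℝ³ := (EuclideanSpace.equiv (Fin 3) ℝ).symm ![0, y, 1 - y ^ 2]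

def creaseNormals : Set ℝ³ := {u | ∃ y : ℝ, (creasePoint y, u) ∈ normalBundle surface}

def lowerCone : Set ℝ³ := {u | ‖u‖ = 1 ∧ u 2 < 0 ∧ |u 0| ≤ -u 2}

lemma norm_eq_one_iff (u : ℝ³) : ‖u‖ = 1 ↔ u 0 ^ 2 + u 1 ^ 2 + u 2 ^ 2 = 1 := by
  rw [← pow_eq_one_iff_of_nonneg (norm_nonneg u) two_ne_zero, EuclideanSpace.real_norm_sq_eq,
    Fin.sum_univ_three]

lemma creasePoint_mem_surface (y : ℝ) : creasePoint y ∈ surface := by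
  simp [surface, creasePoint]

lemma lowerCone_subset_creaseNormals : lowerCone ⊆ creaseNormals := by
  rintro u ⟨hu, hu₂, hcone⟩
  set y := u 1 / (2 * u 2)
  have hy : u 1 = 2 * y * u 2 := by simp only [y]; field_simp [hu₂.ne]
  refine ⟨y, mem_normalBundle_of_le_dist (creasePoint_mem_surface y) hu one_half_pos ?_⟩
  intro q (hq : q 2 = _)
  rw [← pow_le_pow_iff_left₀ one_half_pos.le dist_nonneg two_ne_zero,
    EuclideanSpace.dist_sq_eq, Fin.sum_univ_three]
  simp only [creasePoint, PiLp.continuousLinearEquiv_symm_apply, PiLp.add_apply, PiLp.smul_apply,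
    smul_eq_mul, Matrix.cons_val_zero, Matrix.cons_val_one, Matrix.cons_val, Real.dist_eq, sq_abs,
    hq]
  calc (1 / 2 : ℝ) ^ 2 = 1 / 4 := by norm_num
    _ ≤ _ := quarter_le_sq_dist_of_mem_cone (x := q 0) (t := q 1) ((norm_eq_one_iff u).1 hu) hcone hy
    _ = _ := by ring

def openLowerCone : Set ℝ³ := {w | w 2 < 0 ∧ |w 0| < -w 2}

lemma isOpen_openLowerCone : IsOpen openLowerCone :=
  show IsOpen ({w : ℝ³ | w 2 < 0} ∩ {w | |w 0| < -w 2}) from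
    (isOpen_lt (by fun_prop) (by fun_prop)).inter (isOpen_lt (by fun_prop) (by fun_prop))

def southPole : ℝ³ := !₂[0, 0, -1]

lemma southPole_mem_openLowerCone : southPole ∈ openLowerCone := by
  simp [openLowerCone, southPole]

lemma southPole_mem_lowerCone : southPole ∈ lowerCone := by
  refine ⟨(norm_eq_one_iff _).2 ?_, ?_, ?_⟩ <;> simp [southPole]

def horizontalProj (u : ℝ³) : EuclideanSpace ℝ (Fin 2) := !₂[u 0, u 1]

lemma lipschitzWith_horizontalProj : LipschitzWith 1 horizontalProj := by
  refine LipschitzWith.of_dist_le_mul fun u v => ?_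
  rw [NNReal.coe_one, one_mul, ← pow_le_pow_iff_left₀ dist_nonneg dist_nonneg two_ne_zero,
    EuclideanSpace.dist_sq_eq, EuclideanSpace.dist_sq_eq, Fin.sum_univ_two, Fin.sum_univ_three]
  simp only [horizontalProj, PiLp.toLp_apply, Matrix.cons_val_zero, Matrix.cons_val_one]
  nlinarith [sq_nonneg (dist (u 2) (v 2))]

lemma ball_subset_horizontalProj_image_lowerCone :
    ball 0 (1 / 2) ⊆ horizontalProj '' lowerCone := by
  intro v hv
  have hv_sq : v 0 ^ 2 + v 1 ^ 2 < 1 / 4 := by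
    rw [← Fin.sum_univ_two (fun i => v i ^ 2), ← EuclideanSpace.real_norm_sq_eq]
    nlinarith [mem_ball_zero_iff.1 hv, norm_nonneg v]
  set c := 1 - v 0 ^ 2 - v 1 ^ 2
  have hc : 0 < c := by linarith
  refine ⟨!₂[v 0, v 1, -√c], ⟨?_, ?_, ?_⟩, ?_⟩
  · rw [norm_eq_one_iff]
    simp [Real.sq_sqrt hc.le, c]
  · simpa using hc
  · simpa using Real.abs_le_sqrt (by linarith [sq_nonneg (v 1)] : v 0 ^ 2 ≤ c)
  · ext i
    fin_cases i <;> rfl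

end

end CreasedSurface

open CreasedSurface in
/-- For `A = {(x,y,z) : z = |x|}` and the diffeomorphism `F(x,y,z) = (x, y, z + 1 - x² - y²)`,
so that `F(A) = {(x,y,z) : z = |x| + 1 - x² - y²}`, the set of unit normals of `F(A)` attached
to the curve `{(0, y, 1 - y²) : y ∈ ℝ}` has nonempty interior relative to `S²`; in particular it
has positive `H²` measure. -/
theorem stmt10 :
    (∃ u ∈ {u : EuclideanSpace ℝ (Fin 3) | ∃ y : ℝ,
        (((EuclideanSpace.equiv (Fin 3) ℝ).symm ![0, y, 1 - y ^ 2], u) ∈ normalBundle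
          {p : EuclideanSpace ℝ (Fin 3) | p 2 = |p 0| + 1 - p 0 ^ 2 - p 1 ^ 2})},
      ∃ ε > (0 : ℝ), ∀ w : EuclideanSpace ℝ (Fin 3), ‖w‖ = 1 → dist w u < ε →
        w ∈ {u : EuclideanSpace ℝ (Fin 3) | ∃ y : ℝ,
          (((EuclideanSpace.equiv (Fin 3) ℝ).symm ![0, y, 1 - y ^ 2], u) ∈ normalBundle
            {p : EuclideanSpace ℝ (Fin 3) | p 2 = |p 0| + 1 - p 0 ^ 2 - p 1 ^ 2})})
    ∧ 0 < μH[(2 : ℝ)] {u : EuclideanSpace ℝ (Fin 3) | ∃ y : ℝ,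
        (((EuclideanSpace.equiv (Fin 3) ℝ).symm ![0, y, 1 - y ^ 2], u) ∈ normalBundle
          {p : EuclideanSpace ℝ (Fin 3) | p 2 = |p 0| + 1 - p 0 ^ 2 - p 1 ^ 2})} := by
  obtain ⟨ε, hε, h_ball⟩ := isOpen_iff.1 isOpen_openLowerCone southPole southPole_mem_openLowerCone
  refine ⟨⟨southPole, lowerCone_subset_creaseNormals southPole_mem_lowerCone, ε, hε,
    fun w hw hdist => lowerCone_subset_creaseNormals ?_⟩, ?_⟩
  · obtain ⟨hw₂, hw₀⟩ := h_ball hdist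
    exact ⟨hw, hw₂, hw₀.le⟩
  · have h_interior : (interior (horizontalProj '' lowerCone)).Nonempty :=
      ⟨0, interior_mono ball_subset_horizontalProj_image_lowerCone
        (isOpen_ball.subset_interior_iff.2 subset_rfl (mem_ball_self one_half_pos))⟩
    have h_pos := hausdorffMeasure_pos_of_lipschitzWith lipschitzWith_horizontalProj h_interior
    rw [finrank_euclideanSpace_fin, Nat.cast_ofNat] at h_pos
    exact h_pos.trans_le (measure_mono lowerCone_subset_creaseNormals)
end

section
/- Let n ≥ 2, let v ∈ ℝⁿ be a unit vector, let T = {x ∈ ℝⁿ : x·v = 0} with orthogonal projection T_♮ onto T, let r > 0, and let F : ℝⁿ → ℝⁿ be the diffeomorphism F(x) = x + (r/8)v − (4r)⁻¹|T_♮(x)|² v. Suppose A ⊆ ℝⁿ is closed, x ∈ A, η ∈ ℝⁿ with |η| = 1, and (F(y) − F(x))·η ≤ 0 for every y ∈ A. Let ζ = DF(x)*(η)/|DF(x)*(η)|, where DF(x) is the differential of F at x and * denotes the adjoint. Then δ_A(x + (r/2)ζ) = r/2. -/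
/-!
Write `P` for the orthogonal projection onto `v^⊥` and `w = DF(x)* η = η - (2r)⁻¹ ⟪η, v⟫ P x`.
Expanding `|P y|² = |P x + P (y - x)|²` gives the exact identity
`⟪F y - F x, η⟫ = ⟪y - x, w⟫ - (4r)⁻¹ ⟪η, v⟫ |P (y - x)|²`, and since `⟪η, v⟫ = ⟪w, v⟫ ≤ |w|`
and `|P u| ≤ |u|`, the support condition gives `4r ⟪y - x, w⟫ ≤ |w| |y - x|²` for `y ∈ A`.
Thus `A` misses the open ball of radius `2r` centred at `x + 2r w / |w|`, a fortiori the ball of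
radius `r/2` centred at `x + (r/2) w / |w|`, whose boundary passes through `x ∈ A`.
-/

open Metric

open scoped InnerProductSpace RealInnerProductSpace

theorem Submodule.inner_starProjection_starProjection {𝕜 F : Type*} [RCLike 𝕜]
    [NormedAddCommGroup F] [InnerProductSpace 𝕜 F] (K : Submodule 𝕜 F)
    [K.HasOrthogonalProjection] (y z : F) :
    ⟪K.starProjection y, K.starProjection z⟫_𝕜 = ⟪K.starProjection y, z⟫_𝕜 := by
  rw [← K.inner_starProjection_left_eq_right,
    K.starProjection_eq_self_iff.2 (K.starProjection_apply_mem y)]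

variable {E : Type*} [NormedAddCommGroup E] [InnerProductSpace ℝ E]

theorem infDist_add_smul_eq_of_two_mul_inner_le {A : Set E} {x w : E} {R : ℝ}
    (hx : x ∈ A) (hw : w ≠ 0) (hR : 0 ≤ R)
    (hA : ∀ y ∈ A, 2 * R * ⟪y - x, w⟫ ≤ ‖w‖ * ‖y - x‖ ^ 2) :
    infDist (x + R • (‖w‖⁻¹ • w)) A = R := by
  have hw' : 0 < ‖w‖ := norm_pos_iff.2 hw
  have hdist : ∀ y, dist (x + R • (‖w‖⁻¹ • w)) y ^ 2
      = R ^ 2 - 2 * R * ‖w‖⁻¹ * ⟪y - x, w⟫ + ‖y - x‖ ^ 2 := by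
    intro y
    rw [dist_eq_norm, show x + R • (‖w‖⁻¹ • w) - y = R • (‖w‖⁻¹ • w) - (y - x) by abel,
      norm_sub_sq_real, norm_smul, norm_smul, norm_inv, norm_norm, inv_mul_cancel₀ hw'.ne',
      real_inner_smul_left, real_inner_smul_left, real_inner_comm, Real.norm_of_nonneg hR]
    ring
  refine le_antisymm ?_ ((le_infDist ⟨x, hx⟩).2 fun y hy => ?_)
  · calc infDist (x + R • (‖w‖⁻¹ • w)) A ≤ dist (x + R • (‖w‖⁻¹ • w)) x :=
          infDist_le_dist_of_mem hx
      _ = R := by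
          rw [← sq_eq_sq₀ dist_nonneg hR, hdist]
          simp
  · have hy' : 2 * R * ‖w‖⁻¹ * ⟪y - x, w⟫ ≤ ‖y - x‖ ^ 2 := by
      rw [mul_comm _ ‖w‖⁻¹, mul_assoc, inv_mul_le_iff₀ hw']
      exact hA y hy
    rw [← pow_le_pow_iff_left₀ hR dist_nonneg two_ne_zero, hdist]
    linarith

section ParaboloidMap

variable {v : E}

theorem starProjection_orthogonal_unit_singleton (hv : ‖v‖ = 1) (y : E) :
    (ℝ ∙ v)ᗮ.starProjection y = y - ⟪y, v⟫ • v := by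
  rw [Submodule.starProjection_orthogonal_val, Submodule.starProjection_unit_singleton ℝ hv,
    real_inner_comm]

theorem inner_starProjection_orthogonal_singleton_self (y : E) :
    ⟪(ℝ ∙ v)ᗮ.starProjection y, v⟫ = 0 :=
  Submodule.mem_orthogonal_singleton_iff_inner_left.1 ((ℝ ∙ v)ᗮ.starProjection_apply_mem y)

variable (v) in
noncomputable def paraboloidMap (r : ℝ) (y : E) : E :=
  y + (r / 8) • v - ((4 * r)⁻¹ * ‖(ℝ ∙ v)ᗮ.starProjection y‖ ^ 2) • v

theorem hasFDerivAt_paraboloidMap (r : ℝ) (x : E) :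
    HasFDerivAt (paraboloidMap v r)
      (ContinuousLinearMap.id ℝ E
        - ((2 * r)⁻¹ • innerSL ℝ ((ℝ ∙ v)ᗮ.starProjection x)).smulRight v) x := by
  set P := (ℝ ∙ v)ᗮ.starProjection
  have hP : HasFDerivAt (fun y => (4 * r)⁻¹ * ‖P y‖ ^ 2)
      ((4 * r)⁻¹ • (2 • (innerSL ℝ (P x)).comp P)) x :=
    (P.hasFDerivAt.norm_sq).const_mul _
  refine (((hasFDerivAt_id x).add_const ((r / 8) • v)).sub (hP.smul_const v)).congr_fderiv ?_
  ext u
  simp only [sub_apply, ContinuousLinearMap.id_apply, ContinuousLinearMap.smulRight_apply,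
    smul_apply, innerSL_apply_apply, ContinuousLinearMap.comp_apply, P,
    Submodule.inner_starProjection_starProjection]
  congr 2
  simp only [smul_eq_mul, nsmul_eq_mul, Nat.cast_ofNat]
  ring

theorem adjoint_fderiv_paraboloidMap [CompleteSpace E] (r : ℝ) (x η : E) :
    (fderiv ℝ (paraboloidMap v r) x).adjoint η
      = η - ((2 * r)⁻¹ * ⟪η, v⟫) • (ℝ ∙ v)ᗮ.starProjection x := by
  rw [(hasFDerivAt_paraboloidMap r x).fderiv]
  refine ext_inner_right ℝ fun u => ?_
  simp only [ContinuousLinearMap.adjoint_inner_left, sub_apply, ContinuousLinearMap.id_apply,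
    ContinuousLinearMap.smulRight_apply, smul_apply, innerSL_apply_apply, smul_eq_mul,
    inner_sub_left, inner_sub_right, real_inner_smul_left, real_inner_smul_right]
  rw [real_inner_comm u]
  ring

theorem inner_paraboloidMap_sub (r : ℝ) (x y η : E) :
    ⟪paraboloidMap v r y - paraboloidMap v r x, η⟫
      = ⟪y - x, η - ((2 * r)⁻¹ * ⟪η, v⟫) • (ℝ ∙ v)ᗮ.starProjection x⟫
        - (4 * r)⁻¹ * ⟪η, v⟫ * ‖(ℝ ∙ v)ᗮ.starProjection (y - x)‖ ^ 2 := by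
  set P := (ℝ ∙ v)ᗮ.starProjection
  have hPy : ‖P y‖ ^ 2 = ‖P x‖ ^ 2 + 2 * ⟪P x, y - x⟫ + ‖P (y - x)‖ ^ 2 := by
    rw [← Submodule.inner_starProjection_starProjection, ← norm_add_sq_real, ← map_add,
      add_sub_cancel]
  have hF : paraboloidMap v r y - paraboloidMap v r x
      = (y - x) - ((4 * r)⁻¹ * (‖P y‖ ^ 2 - ‖P x‖ ^ 2)) • v := by
    simp only [paraboloidMap, P]
    module
  rw [hF, hPy, inner_sub_left, real_inner_smul_left, inner_sub_right (y - x),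
    real_inner_smul_right, real_inner_comm (P x), real_inner_comm v]
  ring

variable [CompleteSpace E]

theorem inner_adjoint_fderiv_paraboloidMap_self (r : ℝ) (x η : E) :
    ⟪(fderiv ℝ (paraboloidMap v r) x).adjoint η, v⟫ = ⟪η, v⟫ := by
  rw [adjoint_fderiv_paraboloidMap, inner_sub_left, real_inner_smul_left,
    inner_starProjection_orthogonal_singleton_self, mul_zero, sub_zero]

theorem adjoint_fderiv_paraboloidMap_ne_zero (r : ℝ) (x : E) {η : E} (hη : η ≠ 0) :
    (fderiv ℝ (paraboloidMap v r) x).adjoint η ≠ 0 := by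
  intro h
  have hηv : ⟪η, v⟫ = 0 := by
    rw [← inner_adjoint_fderiv_paraboloidMap_self r x, h, inner_zero_left]
  rw [adjoint_fderiv_paraboloidMap, hηv, mul_zero, zero_smul, sub_zero] at h
  exact hη h

theorem four_mul_inner_adjoint_fderiv_paraboloidMap_le (hv : ‖v‖ = 1) {r : ℝ} (hr : 0 < r)
    {x y η : E} (h : ⟪paraboloidMap v r y - paraboloidMap v r x, η⟫ ≤ 0) :
    4 * r * ⟪y - x, (fderiv ℝ (paraboloidMap v r) x).adjoint η⟫
      ≤ ‖(fderiv ℝ (paraboloidMap v r) x).adjoint η‖ * ‖y - x‖ ^ 2 := by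
  have hηv : ⟪η, v⟫ ≤ ‖(fderiv ℝ (paraboloidMap v r) x).adjoint η‖ := by
    simpa [hv, inner_adjoint_fderiv_paraboloidMap_self] using
      real_inner_le_norm ((fderiv ℝ (paraboloidMap v r) x).adjoint η) v
  set w := (fderiv ℝ (paraboloidMap v r) x).adjoint η
  set P := (ℝ ∙ v)ᗮ.starProjection
  have hP : ‖P (y - x)‖ ^ 2 ≤ ‖y - x‖ ^ 2 := by
    gcongr
    exact (ℝ ∙ v)ᗮ.norm_starProjection_apply_le _
  rw [inner_paraboloidMap_sub, ← adjoint_fderiv_paraboloidMap] at h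
  calc 4 * r * ⟪y - x, w⟫ ≤ 4 * r * ((4 * r)⁻¹ * ⟪η, v⟫ * ‖P (y - x)‖ ^ 2) := by
        gcongr
        linarith
    _ = ⟪η, v⟫ * ‖P (y - x)‖ ^ 2 := by field_simp
    _ ≤ ‖w‖ * ‖P (y - x)‖ ^ 2 := by gcongr
    _ ≤ ‖w‖ * ‖y - x‖ ^ 2 := by gcongr

end ParaboloidMap

theorem stmt12_general {n : ℕ}
    (v : EuclideanSpace ℝ (Fin n)) (hv : ‖v‖ = 1) (r : ℝ) (hr : 0 < r)
    (F : EuclideanSpace ℝ (Fin n) → EuclideanSpace ℝ (Fin n))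
    (hF : ∀ x, F x = x + (r / 8) • v
      - ((4 * r)⁻¹ * ‖x - (inner ℝ x v : ℝ) • v‖ ^ 2) • v)
    (A : Set (EuclideanSpace ℝ (Fin n)))
    (x : EuclideanSpace ℝ (Fin n)) (hx : x ∈ A)
    (η : EuclideanSpace ℝ (Fin n)) (hη : ‖η‖ = 1)
    (hsupp : ∀ y ∈ A, (inner ℝ (F y - F x) η : ℝ) ≤ 0) :
    Metric.infDist
      (x + (r / 2) • (‖ContinuousLinearMap.adjoint (fderiv ℝ F x) η‖⁻¹ •
        ContinuousLinearMap.adjoint (fderiv ℝ F x) η)) A = r / 2 := by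
  obtain rfl : F = paraboloidMap v r :=
    funext fun y => by rw [hF, paraboloidMap, starProjection_orthogonal_unit_singleton hv]
  have hη₀ : η ≠ 0 := norm_ne_zero_iff.1 (by rw [hη]; exact one_ne_zero)
  refine infDist_add_smul_eq_of_two_mul_inner_le hx
    (adjoint_fderiv_paraboloidMap_ne_zero r x hη₀) (by linarith) fun y hy => ?_
  have h := four_mul_inner_adjoint_fderiv_paraboloidMap_le hv hr (hsupp y hy)
  have : 0 ≤ ‖(fderiv ℝ (paraboloidMap v r) x).adjoint η‖ * ‖y - x‖ ^ 2 := by positivity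
  linarith

/-- Let `v` be a unit vector in `ℝⁿ`, `T = {x : x · v = 0}` with orthogonal projection
`T_♮ x = x - (x · v) v`, `r > 0`, and `F(x) = x + (r/8) v - (4r)⁻¹ |T_♮ x|² v`.
If `A ⊆ ℝⁿ` is closed, `x ∈ A`, `|η| = 1` and `(F(y) - F(x)) · η ≤ 0` for every `y ∈ A`,
then, with `ζ = DF(x)*(η) / |DF(x)*(η)|`, one has `δ_A(x + (r/2) ζ) = r/2`. -/
theorem stmt12 {n : ℕ} (hn : 2 ≤ n)
    (v : EuclideanSpace ℝ (Fin n)) (hv : ‖v‖ = 1) (r : ℝ) (hr : 0 < r)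
    (F : EuclideanSpace ℝ (Fin n) → EuclideanSpace ℝ (Fin n))
    (hF : ∀ x, F x = x + (r / 8) • v
      - ((4 * r)⁻¹ * ‖x - (inner ℝ x v : ℝ) • v‖ ^ 2) • v)
    (A : Set (EuclideanSpace ℝ (Fin n))) (hA : IsClosed A)
    (x : EuclideanSpace ℝ (Fin n)) (hx : x ∈ A)
    (η : EuclideanSpace ℝ (Fin n)) (hη : ‖η‖ = 1)
    (hsupp : ∀ y ∈ A, (inner ℝ (F y - F x) η : ℝ) ≤ 0) :
    Metric.infDist
      (x + (r / 2) • (‖ContinuousLinearMap.adjoint (fderiv ℝ F x) η‖⁻¹ •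
        ContinuousLinearMap.adjoint (fderiv ℝ F x) η)) A = r / 2 :=
  stmt12_general v hv r hr F hF A x hx η hη hsupp
end
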